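/- arXiv:1708.01657 — 4 statements merged into one kernel-verified Lean document; each statement's English description precedes it below -/
import Mathlib

section
/- Suppose the weights w : Fin n → ℝ are sorted in nondecreasing order (i ≤ j implies w i ≤ w j). If a set T ⊆ Fin n is packable into m unit-capacity bins, then the initial segment {0, 1, …, |T| − 1} consisting of the |T| smallest-weight items is also packable into m unit-capacity bins. Consequently, the dual bin packing problem always has an optimal solution whose item set is a prefix of the items sorted by increasing weight. -/
/-- `T` is packable into `m` unit-capacity bins under weights `w`. -/
def Packable {n : ℕ} (w : Fin n → ℝ) (m : ℕ) (T : Finset (Fin n)) : Prop :=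
  ∃ p : Fin n → Fin m, ∀ j : Fin m, ∑ i ∈ T.filter (fun i => p i = j), w i ≤ 1

theorem prefix_packable
    (n m : ℕ) (hm : 1 ≤ m) (w : Fin n → ℝ)
    (hw : ∀ i, 0 < w i ∧ w i ≤ 1) (hmono : Monotone w)
    (T : Finset (Fin n)) (hT : Packable w m T) :
    Packable w m (Finset.univ.filter (fun i : Fin n => i.val < T.card)) := by
  obtain ⟨p, hp⟩ := hT
  set c := T.card with hc
  let e : Fin c ≃o T := T.orderIsoOfFin rfl
  -- the k-th smallest element of T has value at least k
  have hle : ∀ k : ℕ, ∀ hk : k < c, k ≤ ((e ⟨k, hk⟩ : Fin n) : ℕ) := by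
    intro k
    induction k with
    | zero => intro hk; exact Nat.zero_le _
    | succ k ih =>
      intro hk
      have hk' : k < c := Nat.lt_of_succ_lt hk
      have h1 := ih hk'
      have hlt : ((e ⟨k, hk'⟩ : Fin n) : ℕ) < ((e ⟨k + 1, hk⟩ : Fin n) : ℕ) := by
        have h2 : (⟨k, hk'⟩ : Fin c) < ⟨k + 1, hk⟩ := by
          simp [Fin.mk_lt_mk]
        have h3 := e.strictMono h2
        exact_mod_cast h3
      omega
  -- the repacking function
  classical
  let F : Fin n → Fin n := fun i => if h : i.val < c then (e ⟨i.val, h⟩ : Fin n) else i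
  refine ⟨fun i => p (F i), fun j => ?_⟩
  set A := (Finset.univ.filter (fun i : Fin n => i.val < c)).filter
      (fun i => p (F i) = j) with hA
  have hA_mem : ∀ i ∈ A, i.val < c ∧ p (F i) = j := by
    intro i hi
    simp only [hA, Finset.mem_filter, Finset.mem_univ, true_and] at hi
    exact hi
  have step1 : ∑ i ∈ A, w i ≤ ∑ i ∈ A, w (F i) := by
    apply Finset.sum_le_sum
    intro i hi
    obtain ⟨hic, -⟩ := hA_mem i hi
    apply hmono
    have := hle i.val hic
    exact Fin.le_def.mpr (by simpa [F, hic] using this)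
  have hinj : Set.InjOn F A := by
    intro a ha b hb hab
    obtain ⟨hac, -⟩ := hA_mem a ha
    obtain ⟨hbc, -⟩ := hA_mem b hb
    simp only [F, dif_pos hac, dif_pos hbc] at hab
    have : (⟨a.val, hac⟩ : Fin c) = ⟨b.val, hbc⟩ := by
      apply e.injective
      exact Subtype.ext hab
    have := congrArg Fin.val this
    exact Fin.ext this
  have step2 : ∑ i ∈ A, w (F i) = ∑ x ∈ A.image F, w x :=
    (Finset.sum_image (fun a ha b hb hab => hinj ha hb hab)).symm
  have hsub : A.image F ⊆ T.filter (fun x => p x = j) := by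
    intro x hx
    obtain ⟨i, hi, rfl⟩ := Finset.mem_image.mp hx
    obtain ⟨hic, hpj⟩ := hA_mem i hi
    refine Finset.mem_filter.mpr ⟨?_, hpj⟩
    simp only [F, dif_pos hic]
    exact (e ⟨i.val, hic⟩).2
  have step3 : ∑ x ∈ A.image F, w x ≤ ∑ x ∈ T.filter (fun x => p x = j), w x := by
    apply Finset.sum_le_sum_of_subset_of_nonneg hsub
    intro x _ _
    exact (hw x).1.le
  calc ∑ i ∈ A, w i ≤ ∑ i ∈ A, w (F i) := step1
    _ = ∑ x ∈ A.image F, w x := step2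
    _ ≤ ∑ x ∈ T.filter (fun x => p x = j), w x := step3
    _ ≤ 1 := hp j
end

section
/- (Kellerer's extension lemma.) Let ε ∈ (0, 1], and let F and S be disjoint sets of items such that every item of S has weight at most ε and the total weight of F plus the total weight of S is at most m(1 − ε). If p is a packing of F into m unit-capacity bins, then there exists a packing of F ∪ S into the m bins that agrees with p on all items of F. In other words, any packing of F of total weight at most m(1 − ε) − w(S) can be completed greedily with all items of S. -/
/-!
Insert the small items one at a time. Before each insertion the packed weight is at most
`m (1 - ε)`, so by pigeonhole some bin has load at most `1 - ε`, and an item of weight at most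
`ε` still fits into it; the packed weight only grows by items that were already counted.
-/

open Finset

namespace BinPacking

variable {ι β : Type*} [DecidableEq β]

def IsPacking (w : ι → ℝ) (T : Finset ι) (p : ι → β) : Prop :=
  ∀ j, ∑ i ∈ T with p i = j, w i ≤ 1

theorem exists_load_le_of_sum_le_card_mul [Fintype β] [Nonempty β] (w : ι → ℝ) (T : Finset ι)
    (p : ι → β) {c : ℝ} (h : ∑ i ∈ T, w i ≤ Fintype.card β * c) :
    ∃ j, ∑ i ∈ T with p i = j, w i ≤ c := by
  obtain ⟨j, -, hj⟩ := exists_sum_fiber_le_of_sum_fiber_nonneg_of_sum_le_nsmul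
    (t := univ) (f := p) (b := c) (by simp) univ_nonempty (by simpa [nsmul_eq_mul] using h)
  exact ⟨j, hj⟩

variable [DecidableEq ι]

theorem IsPacking.update_insert {w : ι → ℝ} {T : Finset ι} {p : ι → β} (hp : IsPacking w T p)
    {s : ι} (hs : s ∉ T) {j : β} (hfit : ∑ i ∈ T with p i = j, w i + w s ≤ 1) :
    IsPacking w (insert s T) (Function.update p s j) := by
  have hagree : ∀ k, {i ∈ T | Function.update p s j i = k} = {i ∈ T | p i = k} := fun k =>
    filter_congr fun i hi => by rw [Function.update_of_ne (ne_of_mem_of_not_mem hi hs)]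
  intro k
  rw [filter_insert, Function.update_self]
  by_cases hk : j = k
  · subst hk
    rw [if_pos rfl, sum_insert (fun h => hs (mem_of_mem_filter s h)), hagree]
    linarith
  · rw [if_neg hk, hagree]
    exact hp k

theorem exists_packing_extension [Fintype β] (w : ι → ℝ) {ε : ℝ} {F S : Finset ι}
    (hdisj : Disjoint F S) (hS_nonneg : ∀ i ∈ S, 0 ≤ w i) (hS : ∀ i ∈ S, w i ≤ ε)
    (hwt : ∑ i ∈ F, w i + ∑ i ∈ S, w i ≤ Fintype.card β * (1 - ε))
    {p : ι → β} (hp : IsPacking w F p) :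
    ∃ q : ι → β, (∀ i ∈ F, q i = p i) ∧ IsPacking w (F ∪ S) q := by
  induction S using Finset.induction_on generalizing F p with
  | empty => exact ⟨p, fun _ _ => rfl, by simpa using hp⟩
  | @insert s S hsS ih =>
    have hsF : s ∉ F := disjoint_right.mp hdisj (mem_insert_self s S)
    rw [sum_insert hsS] at hwt
    have hS_sum : 0 ≤ ∑ i ∈ S, w i := sum_nonneg fun i hi => hS_nonneg i (mem_insert_of_mem hi)
    have hs_nonneg := hS_nonneg s (mem_insert_self s S)
    have : Nonempty β := ⟨p s⟩
    obtain ⟨j, hj⟩ := exists_load_le_of_sum_le_card_mul w F p (c := 1 - ε) (by linarith)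
    have hp' := hp.update_insert hsF (j := j) (by linarith [hS s (mem_insert_self s S)])
    obtain ⟨q, hqF, hq⟩ := ih (disjoint_insert_left.mpr ⟨hsS, disjoint_of_subset_right
        (subset_insert s S) hdisj⟩) (fun i hi => hS_nonneg i (mem_insert_of_mem hi))
      (fun i hi => hS i (mem_insert_of_mem hi)) (by rw [sum_insert hsF]; linarith) hp'
    refine ⟨q, fun i hi => ?_, by rwa [union_insert, ← insert_union]⟩
    rw [hqF i (mem_insert_of_mem hi), Function.update_of_ne (ne_of_mem_of_not_mem hi hsF)]

end BinPacking

open BinPacking in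
theorem kellerer_extension_general
    (n m : ℕ) (w : Fin n → ℝ)
    (hw : ∀ i, 0 < w i ∧ w i ≤ 1)
    (ε : ℝ)
    (F S : Finset (Fin n)) (hdisj : Disjoint F S)
    (hS : ∀ i ∈ S, w i ≤ ε)
    (hwt : (∑ i ∈ F, w i) + (∑ i ∈ S, w i) ≤ m * (1 - ε))
    (p : Fin n → Fin m)
    (hp : ∀ j : Fin m, ∑ i ∈ F.filter (fun i => p i = j), w i ≤ 1) :
    ∃ q : Fin n → Fin m, (∀ i ∈ F, q i = p i) ∧
      ∀ j : Fin m, ∑ i ∈ (F ∪ S).filter (fun i => q i = j), w i ≤ 1 :=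
  exists_packing_extension w hdisj (fun i _ => (hw i).1.le) hS (by simpa using hwt) hp

theorem kellerer_extension
    (n m : ℕ) (hm : 1 ≤ m) (w : Fin n → ℝ)
    (hw : ∀ i, 0 < w i ∧ w i ≤ 1)
    (ε : ℝ) (hε0 : 0 < ε) (hε1 : ε ≤ 1)
    (F S : Finset (Fin n)) (hdisj : Disjoint F S)
    (hS : ∀ i ∈ S, w i ≤ ε)
    (hwt : (∑ i ∈ F, w i) + (∑ i ∈ S, w i) ≤ m * (1 - ε))
    (p : Fin n → Fin m)
    (hp : ∀ j : Fin m, ∑ i ∈ F.filter (fun i => p i = j), w i ≤ 1) :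
    ∃ q : Fin n → Fin m, (∀ i ∈ F, q i = p i) ∧
      ∀ j : Fin m, ∑ i ∈ (F ∪ S).filter (fun i => q i = j), w i ≤ 1 :=
  kellerer_extension_general n m w hw ε F S hdisj hS hwt p hp
end

section
/- Suppose the weights w : Fin n → ℝ are sorted in nondecreasing order. Let ε > 0, let w₀ ∈ (0, 1], and let A = {i : w i < w₀} be the set of all items of weight strictly less than w₀. Suppose that every item of A has weight at most ε, that |A| ≥ m/ε, and that there is a packing p of A into m unit-capacity bins in which every bin has load strictly greater than 1 − w₀. Then every set T ⊆ Fin n that is packable into m unit-capacity bins satisfies |T| ≤ (1 + ε)·|A|. (This is the combinatorial content of the lemma that First Fit Increasing achieves a 1 + ε approximation ratio whenever it terminates having filled all bins using only items of weight at most ε.) -/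
open Finset

section Fibers

variable {ι β M : Type*} [Fintype β] [DecidableEq β]
  [AddCommMonoid M] [PartialOrder M] [IsOrderedAddMonoid M]

theorem Finset.sum_le_card_nsmul_of_sum_fiber_le {s : Finset ι} {p : ι → β} {f : ι → M} {c : M}
    (h : ∀ j, ∑ i ∈ s with p i = j, f i ≤ c) : ∑ i ∈ s, f i ≤ Fintype.card β • c := by
  rw [← sum_fiberwise s p f]
  exact sum_le_card_nsmul univ _ c fun j _ => h j

theorem Finset.card_nsmul_le_sum_of_le_sum_fiber {s : Finset ι} {p : ι → β} {f : ι → M} {c : M}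
    (h : ∀ j, c ≤ ∑ i ∈ s with p i = j, f i) : Fintype.card β • c ≤ ∑ i ∈ s, f i := by
  rw [← sum_fiberwise s p f]
  exact card_nsmul_le_sum univ _ c fun j _ => h j

end Fibers

theorem Packable.sum_le {n m : ℕ} {w : Fin n → ℝ} {T : Finset (Fin n)} (hT : Packable w m T) :
    ∑ i ∈ T, w i ≤ m := by
  obtain ⟨p, hp⟩ := hT
  simpa using sum_le_card_nsmul_of_sum_fiber_le hp

theorem Finset.sum_filter_neg_le_sum {ι M : Type*} [Fintype ι]
    [AddCommGroup M] [LinearOrder M] [IsOrderedAddMonoid M] (g : ι → M) (T : Finset ι) :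
    ∑ i with g i < 0, g i ≤ ∑ i ∈ T, g i :=
  calc ∑ i with g i < 0, g i
      ≤ ∑ i ∈ T with g i < 0, g i :=
        sum_le_sum_of_subset_of_nonpos' (filter_subset_filter _ (subset_univ T))
          fun _ hi _ => (mem_filter.1 hi).2.le
    _ ≤ ∑ i ∈ T, g i :=
        sum_le_sum_of_subset_of_nonneg (filter_subset _ T)
          fun _ hiT hi => not_lt.1 fun hneg => hi (mem_filter.2 ⟨hiT, hneg⟩)

theorem ffi_small_items_approx_general
    (n m : ℕ) (w : Fin n → ℝ)
    (ε : ℝ) (hε : 0 < ε)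
    (w₀ : ℝ) (hw₀0 : 0 < w₀)
    (A : Finset (Fin n)) (hA : A = Finset.univ.filter (fun i => w i < w₀))
    (hbig : (m : ℝ) / ε ≤ A.card)
    (p : Fin n → Fin m)
    (hfull : ∀ j : Fin m, 1 - w₀ < ∑ i ∈ A.filter (fun i => p i = j), w i)
    (T : Finset (Fin n)) (hT : Packable w m T) :
    (T.card : ℝ) ≤ (1 + ε) * A.card := by
  have hA_minimal : ∑ i ∈ A, (w i - w₀) ≤ ∑ i ∈ T, (w i - w₀) := by
    simpa only [hA, sub_neg] using sum_filter_neg_le_sum (fun i => w i - w₀) T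
  have hA_load : m * (1 - w₀) ≤ ∑ i ∈ A, w i := by
    simpa using card_nsmul_le_sum_of_le_sum_fiber fun j => (hfull j).le
  have hm : (m : ℝ) ≤ ε * A.card := by
    rwa [div_le_iff₀ hε, mul_comm] at hbig
  simp only [sum_sub_distrib, sum_const, nsmul_eq_mul] at hA_minimal
  have hcard : ((T.card : ℝ) - A.card) * w₀ ≤ m * w₀ := by
    linarith [hT.sum_le]
  linarith [le_of_mul_le_mul_right hcard hw₀0]

theorem ffi_small_items_approx
    (n m : ℕ) (hm : 1 ≤ m) (w : Fin n → ℝ)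
    (hw : ∀ i, 0 < w i ∧ w i ≤ 1) (hmono : Monotone w)
    (ε : ℝ) (hε : 0 < ε)
    (w₀ : ℝ) (hw₀0 : 0 < w₀) (hw₀1 : w₀ ≤ 1)
    (A : Finset (Fin n)) (hA : A = Finset.univ.filter (fun i => w i < w₀))
    (hsmall : ∀ i ∈ A, w i ≤ ε)
    (hbig : (m : ℝ) / ε ≤ A.card)
    (p : Fin n → Fin m)
    (hp : ∀ j : Fin m, ∑ i ∈ A.filter (fun i => p i = j), w i ≤ 1)
    (hfull : ∀ j : Fin m, 1 - w₀ < ∑ i ∈ A.filter (fun i => p i = j), w i)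
    (T : Finset (Fin n)) (hT : Packable w m T) :
    (T.card : ℝ) ≤ (1 + ε) * A.card :=
  ffi_small_items_approx_general n m w ε hε w₀ hw₀0 A hA hbig p hfull T hT
end

section
/- (Perfect packing of the instance constructed in the reduction from binary separation.) Let n = n₁ + n₂ with n₁, n₂ ∈ ℕ, let 0 < δ < 1/2, and let a : Fin n → ℝ satisfy δ < a i < 1/2 for all i. Let Lg ⊆ Fin n with |Lg| = n₁ (the indices of the large items). Consider the collection of 2n item weights consisting of: n₁ items of weight 1/2 + δ (phase 1); for each i ∈ Fin n, one item of weight 1/2 − a i (phase 2); and for each i ∉ Lg, one item of weight 1/2 + a i (phase 3). Then all 2n items can be packed into n unit-capacity bins: each phase-1 item is paired with a phase-2 item whose index lies in Lg, and each remaining phase-2 item is paired with its complementary phase-3 item. -/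
/-!
Pack bin `j` as follows: the phase-2 item `1/2 - a j` always goes to bin `j`. The bins indexed
by `Lg` (exactly `n₁` of them) each receive one phase-1 item, of load `1/2 + δ + 1/2 - a j ≤ 1`
since `δ < a j`; every other bin receives the complementary phase-3 item, of load exactly `1`.
-/

open Finset

noncomputable def binLoad {ι β : Type*} [Fintype ι] [DecidableEq β] (p : ι → β) (w : ι → ℝ)
    (j : β) : ℝ :=
  ∑ x ∈ univ.filter (fun x => p x = j), w x

section BinLoad

variable {ι κ β : Type*} [Fintype ι] [Fintype κ] [DecidableEq β]

theorem binLoad_sumElim (p : ι → β) (q : κ → β) (w : ι → ℝ) (v : κ → ℝ) (j : β) :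
    binLoad (Sum.elim p q) (Sum.elim w v) j = binLoad p w j + binLoad q v j := by
  simp only [binLoad, sum_filter, Fintype.sum_sum_type, Sum.elim_inl, Sum.elim_inr]
  rfl

theorem binLoad_comp_of_injective {f : ι → β} (hf : f.Injective) (v : β → ℝ) (j : β) :
    binLoad f (v ∘ f) j = (Set.range f).indicator v j := by
  by_cases hj : j ∈ Set.range f
  · obtain ⟨x, rfl⟩ := hj
    have hfiber : univ.filter (fun y => f y = f x) = {x} := by ext y; simp [hf.eq_iff]
    simp [binLoad, hfiber]
  · have hempty : ∀ x, f x ≠ j := fun x hx => hj ⟨x, hx⟩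
    simp [binLoad, hempty, hj]

end BinLoad

theorem reduction_perfect_packing_general
    (n₁ n : ℕ)
    (δ : ℝ)
    (a : Fin n → ℝ) (ha : ∀ i, δ < a i ∧ a i < 1/2)
    (Lg : Finset (Fin n)) (hLg : Lg.card = n₁) :
    -- the items: `n₁` phase-1 items of weight `1/2 + δ`, for each `i` a
    -- phase-2 item of weight `1/2 - a i`, and for each small index `i ∉ Lg`
    -- a complementary phase-3 item of weight `1/2 + a i`
    ∃ p : (Fin n₁ ⊕ Fin n ⊕ {i : Fin n // i ∉ Lg}) → Fin n,
      ∀ j : Fin n,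
        ∑ x ∈ Finset.univ.filter (fun x => p x = j),
          Sum.elim (fun _ => 1/2 + δ)
            (Sum.elim (fun i => 1/2 - a i) (fun i => 1/2 + a i.val)) x ≤ 1 := by
  refine ⟨Sum.elim (Lg.orderEmbOfFin hLg) (Sum.elim id Subtype.val), fun j => ?_⟩
  change binLoad _ _ j ≤ 1
  rw [binLoad_sumElim, binLoad_sumElim]
  erw [binLoad_comp_of_injective (v := fun _ => 1/2 + δ) (Lg.orderEmbOfFin hLg).injective,
    binLoad_comp_of_injective (v := fun i => 1/2 - a i) Function.injective_id,
    binLoad_comp_of_injective (v := fun i => 1/2 + a i) Subtype.val_injective,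
    range_orderEmbOfFin, Set.range_id, Subtype.range_coe_subtype]
  by_cases hj : j ∈ Lg
  · simp only [hj, Set.indicator_of_mem, Set.mem_univ, Set.indicator_of_notMem, mem_coe,
      Set.mem_ofPred_eq, not_true_eq_false, not_false_eq_true]
    linarith [(ha j).1]
  · norm_num [hj]

theorem reduction_perfect_packing
    (n₁ n₂ n : ℕ) (hn : n = n₁ + n₂)
    (δ : ℝ) (hδ0 : 0 < δ) (hδ1 : δ < 1/2)
    (a : Fin n → ℝ) (ha : ∀ i, δ < a i ∧ a i < 1/2)
    (Lg : Finset (Fin n)) (hLg : Lg.card = n₁) :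
    -- the items: `n₁` phase-1 items of weight `1/2 + δ`, for each `i` a
    -- phase-2 item of weight `1/2 - a i`, and for each small index `i ∉ Lg`
    -- a complementary phase-3 item of weight `1/2 + a i`
    ∃ p : (Fin n₁ ⊕ Fin n ⊕ {i : Fin n // i ∉ Lg}) → Fin n,
      ∀ j : Fin n,
        ∑ x ∈ Finset.univ.filter (fun x => p x = j),
          Sum.elim (fun _ => 1/2 + δ)
            (Sum.elim (fun i => 1/2 - a i) (fun i => 1/2 + a i.val)) x ≤ 1 :=
  reduction_perfect_packing_general n₁ n δ a ha Lg hLg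
end
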